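/- Let ξ, ν ∈ ℝ² with |ξ| = |ν| = 1 and ξ · ν = 0, and let u, v ∈ ℂ² with Im⟨u, v⟩ ≠ 0 (where ⟨u,v⟩ = Σ u_i conj(v_i)). Then Re Σ_{i,j,k,l=1}^2 a_{ij}^{kl} (ξ_l u_j − ν_l v_j) conj(ξ_k u_i − ν_k v_i) > 0, for the principal coefficients a_{ij}^{kl} of Hibler's operator at a fixed symmetric ε, with P > 0 and δ > 0. -/

import Mathlib

open Finset Real Matrix

/-- Hibler's quadratic form `Δ²(d)`. -/
noncomputable def Dsq (e : ℝ) (d : Matrix (Fin 2) (Fin 2) ℝ) : ℝ :=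
  (d 0 0 + d 1 1)^2 + (1/e^2)*(d 0 0 - d 1 1)^2 + (1/e^2)*(d 0 1 + d 1 0)^2

/-- The 4×4 matrix representing Hibler's map `𝕊`. -/
noncomputable def S4 (e : ℝ) : Matrix (Fin 4) (Fin 4) ℝ :=
  !![1+1/e^2, 0, 0, 1-1/e^2;
     0, 1/e^2, 1/e^2, 0;
     0, 1/e^2, 1/e^2, 0;
     1-1/e^2, 0, 0, 1+1/e^2]

/-- Identification of a 2×2 matrix with a vector in ℝ⁴. -/
def vec4 (d : Matrix (Fin 2) (Fin 2) ℝ) : Fin 4 → ℝ := ![d 0 0, d 0 1, d 1 0, d 1 1]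

/-- Pair index `(i,k) ↦ 2i+k`. -/
def pidx (i k : Fin 2) : Fin 4 := ⟨2*i.1 + k.1, by have := i.2; have := k.2; omega⟩

/-- Hibler's tensor `𝕊_{ij}^{kl}`. -/
noncomputable def Sten (e : ℝ) (i j k l : Fin 2) : ℝ := S4 e (pidx i k) (pidx j l)

/-- The matrix `𝕊ε`. -/
noncomputable def Smap (e : ℝ) (ε : Matrix (Fin 2) (Fin 2) ℝ) : Matrix (Fin 2) (Fin 2) ℝ :=
  fun i k => ∑ j : Fin 2, ∑ l : Fin 2, Sten e i j k l * ε j l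

/-- Regularized `Δ_δ(ε) = √(δ + Δ²(ε))`. -/
noncomputable def Ddel (e δ : ℝ) (ε : Matrix (Fin 2) (Fin 2) ℝ) : ℝ :=
  Real.sqrt (δ + Dsq e ε)

/-- Principal coefficients `a_{ij}^{kl}` of Hibler's operator. -/
noncomputable def aCoef (e δ P : ℝ) (ε : Matrix (Fin 2) (Fin 2) ℝ) (i j k l : Fin 2) : ℝ :=
  P/(2*Ddel e δ ε) * (Sten e i j k l - (1/(Ddel e δ ε)^2) * Smap e ε i k * Smap e ε j l)

/-!
Write `X, Y` for the real and imaginary parts of `ξ ⊗ u − ν ⊗ v`; the real part of the form is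
`Q(X) + Q(Y)` with `Q(d) = Σ a_{ij}^{kl} d_{ik} d_{jl}`. In the coordinates
`(d₁₁ + d₂₂, (d₁₁ − d₂₂)/e, (d₁₂ + d₂₁)/e)` both `Δ²` and `(d, d') ↦ 𝕊d : d'` are Euclidean, so
`Q(d) = P/(2Δ_δ) (Δ²(d) − (𝕊ε : d)²/Δ_δ²)` and Cauchy–Schwarz `(𝕊ε : d)² ≤ Δ²(ε) Δ²(d)` give
`Q(d) ≥ Pδ/(2Δ_δ³) Δ²(d)`. If `Δ²(X) = Δ²(Y) = 0`, the diagonal of `ξ ⊗ u − ν ⊗ v` vanishes,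
i.e. `ξ_i u_i = ν_i v_i`; since the rows `(ξ_i, ν_i)` of the orthogonal matrix `(ξ ν)` are
nonzero, `u_i` and `v_i` are real-proportional and `Im ⟨u, v⟩ = 0`.
-/

theorem sq_add_sq_eq_one_of_orthonormal {ξ ν : Fin 2 → ℝ} (hξ : ξ 0 ^ 2 + ξ 1 ^ 2 = 1)
    (hν : ν 0 ^ 2 + ν 1 ^ 2 = 1) (horth : ξ 0 * ν 0 + ξ 1 * ν 1 = 0) (i : Fin 2) :
    ξ i ^ 2 + ν i ^ 2 = 1 := by
  fin_cases i
  · show ξ 0 ^ 2 + ν 0 ^ 2 = 1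
    linear_combination ξ 1 ^ 2 * hν + (1 - ν 0 ^ 2) * hξ + (ξ 0 * ν 0 - ξ 1 * ν 1) * horth
  · show ξ 1 ^ 2 + ν 1 ^ 2 = 1
    linear_combination ξ 0 ^ 2 * hν + (1 - ν 1 ^ 2) * hξ + (ξ 1 * ν 1 - ξ 0 * ν 0) * horth

theorem Complex.im_mul_conj_eq_zero_of_mul_eq_mul {a b : ℝ} (hab : a ≠ 0 ∨ b ≠ 0) {z w : ℂ}
    (h : (a : ℂ) * z = b * w) : (z * (starRingEnd ℂ) w).im = 0 := by
  have hre : a * z.re = b * w.re := by simpa using congrArg Complex.re h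
  have him : a * z.im = b * w.im := by simpa using congrArg Complex.im h
  simp only [Complex.mul_im, Complex.conj_re, Complex.conj_im]
  rcases hab with ha | hb
  · refine (mul_eq_zero.mp ?_).resolve_left ha
    linear_combination w.re * him - w.im * hre
  · refine (mul_eq_zero.mp ?_).resolve_left hb
    linear_combination z.re * him - z.im * hre

section QuadForm

variable {ι κ : Type*} [Fintype ι] [Fintype κ]

def quadForm (A : ι → ι → κ → κ → ℝ) (d : Matrix ι κ ℝ) : ℝ :=
  ∑ i, ∑ j, ∑ k, ∑ l, A i j k l * d j l * d i k

theorem quadForm_eq_sum_sum (A : ι → ι → κ → κ → ℝ) (d : Matrix ι κ ℝ) :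
    quadForm A d = ∑ i, ∑ k, (∑ j, ∑ l, A i j k l * d j l) * d i k := by
  simp only [quadForm, Finset.sum_mul]
  exact Finset.sum_congr rfl fun i _ => Finset.sum_comm

theorem quadForm_const_mul_sub_mul_mul (A : ι → ι → κ → κ → ℝ) (c b : ℝ) (s d : Matrix ι κ ℝ) :
    quadForm (fun i j k l => c * (A i j k l - b * s i k * s j l)) d
      = c * (quadForm A d - b * (∑ i, ∑ k, s i k * d i k) ^ 2) := by
  have h : ∀ i j k l, c * (A i j k l - b * s i k * s j l) * d j l * d i k
      = c * (A i j k l * d j l * d i k) - c * b * (s i k * d i k) * (s j l * d j l) :=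
    fun _ _ _ _ => by ring
  simp only [quadForm, h, Finset.sum_sub_distrib, ← Finset.mul_sum, ← Finset.sum_mul]
  ring

theorem re_sum_mul_conj_eq_quadForm (A : ι → ι → κ → κ → ℝ) (Z : Matrix ι κ ℂ) :
    (∑ i, ∑ j, ∑ k, ∑ l, (A i j k l : ℂ) * Z j l * (starRingEnd ℂ) (Z i k)).re
      = quadForm A (Z.map Complex.re) + quadForm A (Z.map Complex.im) := by
  simp only [quadForm, Complex.re_sum, ← Finset.sum_add_distrib, Matrix.map_apply,
    Complex.mul_re, Complex.mul_im, Complex.ofReal_re, Complex.ofReal_im, Complex.conj_re,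
    Complex.conj_im]
  ring_nf

end QuadForm

section Hibler

variable {e : ℝ}

noncomputable def hiblerCoords (e : ℝ) (d : Matrix (Fin 2) (Fin 2) ℝ) : Fin 3 → ℝ :=
  ![d 0 0 + d 1 1, (d 0 0 - d 1 1) / e, (d 0 1 + d 1 0) / e]

theorem Dsq_eq_sum_sq (d : Matrix (Fin 2) (Fin 2) ℝ) :
    Dsq e d = ∑ m, hiblerCoords e d m ^ 2 := by
  simp only [Dsq, hiblerCoords, Fin.sum_univ_three, Matrix.cons_val]
  ring

theorem Dsq_nonneg (d : Matrix (Fin 2) (Fin 2) ℝ) : 0 ≤ Dsq e d := by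
  rw [Dsq_eq_sum_sq]
  positivity

theorem sum_Smap_mul_eq (ε d : Matrix (Fin 2) (Fin 2) ℝ) :
    ∑ i, ∑ k, Smap e ε i k * d i k = ∑ m, hiblerCoords e ε m * hiblerCoords e d m := by
  simp only [Smap, Sten, S4, one_div, pidx, of_apply, cons_val', cons_val_fin_one,
    Fin.sum_univ_two, Fin.isValue, Fin.coe_ofNat_eq_mod, Nat.zero_mod, add_zero, Nat.mod_succ,
    cons_val_succ', mul_zero, Fin.zero_eta, cons_val_zero, mul_one, Fin.reduceFinMk,
    Matrix.cons_val, zero_mul, zero_add, cons_val_one, hiblerCoords, Fin.sum_univ_three]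
  ring

theorem quadForm_Sten (d : Matrix (Fin 2) (Fin 2) ℝ) : quadForm (Sten e) d = Dsq e d := by
  simpa only [Dsq_eq_sum_sq, sq] using (quadForm_eq_sum_sum (Sten e) d).trans (sum_Smap_mul_eq d d)

theorem sq_sum_Smap_mul_le (ε d : Matrix (Fin 2) (Fin 2) ℝ) :
    (∑ i, ∑ k, Smap e ε i k * d i k) ^ 2 ≤ Dsq e ε * Dsq e d := by
  rw [sum_Smap_mul_eq, Dsq_eq_sum_sq, Dsq_eq_sum_sq]
  exact Finset.sum_mul_sq_le_sq_mul_sq _ _ _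

variable {δ : ℝ}

theorem Ddel_pos (hδ : 0 < δ) (ε : Matrix (Fin 2) (Fin 2) ℝ) : 0 < Ddel e δ ε :=
  Real.sqrt_pos.2 (add_pos_of_pos_of_nonneg hδ (Dsq_nonneg ε))

theorem Ddel_sq (hδ : 0 ≤ δ) (ε : Matrix (Fin 2) (Fin 2) ℝ) : Ddel e δ ε ^ 2 = δ + Dsq e ε :=
  Real.sq_sqrt (add_nonneg hδ (Dsq_nonneg ε))

theorem quadForm_aCoef (P : ℝ) (ε d : Matrix (Fin 2) (Fin 2) ℝ) :
    quadForm (aCoef e δ P ε) d = P / (2 * Ddel e δ ε)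
      * (Dsq e d - 1 / Ddel e δ ε ^ 2 * (∑ i, ∑ k, Smap e ε i k * d i k) ^ 2) := by
  rw [← quadForm_Sten]
  exact quadForm_const_mul_sub_mul_mul (Sten e) _ _ (Smap e ε) d

theorem mul_Dsq_le_quadForm_aCoef {P : ℝ} (hδ : 0 < δ) (hP : 0 ≤ P)
    (ε d : Matrix (Fin 2) (Fin 2) ℝ) :
    P * δ / (2 * Ddel e δ ε ^ 3) * Dsq e d ≤ quadForm (aCoef e δ P ε) d := by
  have hΔ := Ddel_pos (e := e) hδ ε
  have hgap : quadForm (aCoef e δ P ε) d - P * δ / (2 * Ddel e δ ε ^ 3) * Dsq e d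
      = P / (2 * Ddel e δ ε ^ 3) * (Dsq e ε * Dsq e d - (∑ i, ∑ k, Smap e ε i k * d i k) ^ 2) := by
    rw [quadForm_aCoef]
    field_simp
    rw [Ddel_sq hδ.le]
    ring
  rw [← sub_nonneg, hgap]
  exact mul_nonneg (by positivity) (sub_nonneg.mpr (sq_sum_Smap_mul_le ε d))

theorem Dsq_pos_of_diag_ne_zero (he : e ≠ 0) {d : Matrix (Fin 2) (Fin 2) ℝ} {i : Fin 2}
    (hi : d i i ≠ 0) : 0 < Dsq e d := by
  refine (Dsq_nonneg d).lt_of_ne fun h => hi ?_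
  rw [Dsq_eq_sum_sq, eq_comm, Finset.sum_eq_zero_iff_of_nonneg fun _ _ => sq_nonneg _] at h
  have htrace : d 0 0 + d 1 1 = 0 := by simpa [hiblerCoords] using h 0 (mem_univ _)
  have hdiff : d 0 0 - d 1 1 = 0 := by simpa [hiblerCoords, he] using h 1 (mem_univ _)
  fin_cases i
  · show d 0 0 = 0; linarith
  · show d 1 1 = 0; linarith

theorem Dsq_re_add_Dsq_im_pos (he : e ≠ 0) {Z : Matrix (Fin 2) (Fin 2) ℂ} {i : Fin 2}
    (hi : Z i i ≠ 0) : 0 < Dsq e (Z.map Complex.re) + Dsq e (Z.map Complex.im) := by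
  rcases not_and_or.mp fun h => hi (Complex.ext h.1 h.2) with hre | him
  · exact add_pos_of_pos_of_nonneg (Dsq_pos_of_diag_ne_zero he hre) (Dsq_nonneg _)
  · exact add_pos_of_nonneg_of_pos (Dsq_nonneg _) (Dsq_pos_of_diag_ne_zero he him)

end Hibler

theorem hibler_ls_pos_general (e δ P : ℝ) (he : 0 < e) (hδ : 0 < δ) (hP : 0 < P)
    (ε : Matrix (Fin 2) (Fin 2) ℝ)
    (ξ ν : Fin 2 → ℝ) (hξ : ξ 0^2 + ξ 1^2 = 1) (hν : ν 0^2 + ν 1^2 = 1)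
    (horth : ξ 0 * ν 0 + ξ 1 * ν 1 = 0) (u v : Fin 2 → ℂ)
    (hIm : (u 0 * (starRingEnd ℂ) (v 0) + u 1 * (starRingEnd ℂ) (v 1)).im ≠ 0) :
    0 < (∑ i : Fin 2, ∑ j : Fin 2, ∑ k : Fin 2, ∑ l : Fin 2,
        (aCoef e δ P ε i j k l : ℂ) * ((ξ l : ℂ) * u j - (ν l : ℂ) * v j)
          * (starRingEnd ℂ) ((ξ k : ℂ) * u i - (ν k : ℂ) * v i)).re := by
  set Z : Matrix (Fin 2) (Fin 2) ℂ := fun i k => (ξ k : ℂ) * u i - (ν k : ℂ) * v i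
  obtain ⟨i, hi⟩ : ∃ i, Z i i ≠ 0 := by
    by_contra! hZ
    have hcol (i : Fin 2) : (u i * (starRingEnd ℂ) (v i)).im = 0 := by
      refine Complex.im_mul_conj_eq_zero_of_mul_eq_mul ?_ (sub_eq_zero.mp (hZ i))
      have hrow := sq_add_sq_eq_one_of_orthonormal hξ hν horth i
      by_contra! h0
      simp [h0.1, h0.2] at hrow
    exact hIm (by rw [Complex.add_im, hcol 0, hcol 1, add_zero])
  have hc : 0 < P * δ / (2 * Ddel e δ ε ^ 3) := by
    have := Ddel_pos (e := e) hδ ε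
    positivity
  calc (0 : ℝ)
      < P * δ / (2 * Ddel e δ ε ^ 3) * (Dsq e (Z.map Complex.re) + Dsq e (Z.map Complex.im)) :=
        mul_pos hc (Dsq_re_add_Dsq_im_pos he.ne' hi)
    _ ≤ quadForm (aCoef e δ P ε) (Z.map Complex.re) + quadForm (aCoef e δ P ε) (Z.map Complex.im) := by
        rw [mul_add]
        exact add_le_add (mul_Dsq_le_quadForm_aCoef hδ hP.le _ _)
          (mul_Dsq_le_quadForm_aCoef hδ hP.le _ _)
    _ = _ := (re_sum_mul_conj_eq_quadForm _ Z).symm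

/-- strict positivity in the Lopatinskii–Shapiro condition when
Im⟨u,v⟩ ≠ 0. -/
theorem hibler_ls_pos (e δ P : ℝ) (he : 0 < e) (hδ : 0 < δ) (hP : 0 < P)
    (ε : Matrix (Fin 2) (Fin 2) ℝ) (hε : ε.IsSymm)
    (ξ ν : Fin 2 → ℝ) (hξ : ξ 0^2 + ξ 1^2 = 1) (hν : ν 0^2 + ν 1^2 = 1)
    (horth : ξ 0 * ν 0 + ξ 1 * ν 1 = 0) (u v : Fin 2 → ℂ)
    (hIm : (u 0 * (starRingEnd ℂ) (v 0) + u 1 * (starRingEnd ℂ) (v 1)).im ≠ 0) :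
    0 < (∑ i : Fin 2, ∑ j : Fin 2, ∑ k : Fin 2, ∑ l : Fin 2,
        (aCoef e δ P ε i j k l : ℂ) * ((ξ l : ℂ) * u j - (ν l : ℂ) * v j)
          * (starRingEnd ℂ) ((ξ k : ℂ) * u i - (ν k : ℂ) * v i)).re :=
  hibler_ls_pos_general e δ P he hδ hP ε ξ ν hξ hν horth u v hIm
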